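/- arXiv:1908.03016 — 6 statements merged into one kernel-verified Lean document; each statement's English description precedes it below -/
import Mathlib

section
/- Let V be a four-dimensional real vector space equipped with a linear complex structure J (an endomorphism with J² = -id), and let ω be an alternating bilinear form on V satisfying ω(Jv,Jw) = -ω(v,w) for all v,w ∈ V. Then either ω = 0 or ω is nondegenerate. -/
/-!
The kernel of `ω` is `J`-invariant, because `ω (J x) y = ω x (J y)`. So if `ω` is degenerate its
kernel contains some `v ≠ 0` together with `J v`, and if moreover `ω ≠ 0` there is some `u` outside
the kernel. Since `J² = -1` has no real eigenvalues, `v, J v, u, J u` is then a basis of `V`,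
and `ω` vanishes on all pairs of basis vectors: on those involving `v` or `J v` because they lie
in the kernel, and on the others because `ω u u = ω u (J u) = 0`. Hence `ω = 0` after all.
-/

namespace ComplexStructure

variable {V : Type*} [AddCommGroup V] [Module ℝ V] {J : V →ₗ[ℝ] V}

/-- Applying `J` to `a • u + b • J u` and recombining yields `(a ^ 2 + b ^ 2) • u ∈ W`. -/
theorem eq_zero_of_smul_add_smul_mem {W : Submodule ℝ V} (hJ : ∀ x, J (J x) = -x)
    (hW : ∀ x ∈ W, J x ∈ W) {u : V} (hu : u ∉ W) {a b : ℝ} (h : a • u + b • J u ∈ W) :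
    a = 0 ∧ b = 0 := by
  have hsq : (a ^ 2 + b ^ 2) • u ∈ W := by
    have hJmem := hW _ h
    rw [map_add, map_smul, map_smul, hJ] at hJmem
    convert sub_mem (W.smul_mem a h) (W.smul_mem b hJmem) using 1
    module
  have hzero : a ^ 2 + b ^ 2 = 0 := by
    by_contra hne
    exact hu ((W.smul_mem_iff hne).mp hsq)
  constructor <;> nlinarith [sq_nonneg a, sq_nonneg b]

theorem linearIndependent_J_pairs {W : Submodule ℝ V} (hJ : ∀ x, J (J x) = -x)
    (hW : ∀ x ∈ W, J x ∈ W) {v u : V} (hv : v ∈ W) (hv0 : v ≠ 0) (hu : u ∉ W) :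
    LinearIndependent ℝ ![v, J v, u, J u] := by
  rw [Fintype.linearIndependent_iff]
  intro g hg
  simp only [Fin.sum_univ_four, Matrix.cons_val_zero, Matrix.cons_val_one, Matrix.cons_val_two,
    Matrix.cons_val_three, Matrix.head_cons, Matrix.tail_cons] at hg
  have hvW : g 0 • v + g 1 • J v ∈ W := add_mem (W.smul_mem _ hv) (W.smul_mem _ (hW v hv))
  obtain ⟨h2, h3⟩ : g 2 = 0 ∧ g 3 = 0 := by
    refine eq_zero_of_smul_add_smul_mem hJ hW hu ?_
    have hsum : g 2 • u + g 3 • J u = -(g 0 • v + g 1 • J v) := by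
      linear_combination (norm := module) hg
    exact hsum ▸ neg_mem hvW
  obtain ⟨h0, h1⟩ : g 0 = 0 ∧ g 1 = 0 := by
    refine eq_zero_of_smul_add_smul_mem (W := ⊥) hJ (by simp) (by simpa using hv0) ?_
    simpa [h2, h3] using hg
  intro i
  fin_cases i <;> assumption

variable {ω : V →ₗ[ℝ] V →ₗ[ℝ] ℝ}

theorem self_eq_zero (halt : ∀ v w, ω v w = -ω w v) (x : V) : ω x x = 0 := by
  linarith [halt x x]

theorem J_left_eq_J_right (hJ : ∀ x, J (J x) = -x) (hanti : ∀ v w, ω (J v) (J w) = -ω v w)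
    (x y : V) : ω (J x) y = ω x (J y) := by
  have h := hanti x (J y)
  rw [hJ, map_neg] at h
  linarith

theorem self_J_eq_zero (hJ : ∀ x, J (J x) = -x) (halt : ∀ v w, ω v w = -ω w v)
    (hanti : ∀ v w, ω (J v) (J w) = -ω v w) (x : V) : ω x (J x) = 0 := by
  linarith [J_left_eq_J_right hJ hanti x x, halt (J x) x]

theorem J_self_eq_zero (hJ : ∀ x, J (J x) = -x) (halt : ∀ v w, ω v w = -ω w v)
    (hanti : ∀ v w, ω (J v) (J w) = -ω v w) (x : V) : ω (J x) x = 0 := by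
  rw [J_left_eq_J_right hJ hanti, self_J_eq_zero hJ halt hanti]

theorem J_mem_ker (hJ : ∀ x, J (J x) = -x) (hanti : ∀ v w, ω (J v) (J w) = -ω v w) {x : V}
    (hx : x ∈ LinearMap.ker ω) : J x ∈ LinearMap.ker ω := by
  ext y
  rw [LinearMap.mem_ker] at hx
  simp [J_left_eq_J_right hJ hanti, hx]

theorem apply_eq_zero_of_mem_ker (halt : ∀ v w, ω v w = -ω w v) {x : V}
    (hx : x ∈ LinearMap.ker ω) (y : V) : ω y x = 0 := by
  rw [halt, LinearMap.mem_ker.mp hx, LinearMap.zero_apply, neg_zero]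

end ComplexStructure

open ComplexStructure in
theorem antiInvariant_form_zero_or_nondegenerate_general
    (V : Type*) [AddCommGroup V] [Module ℝ V]
    (hdim : Module.finrank ℝ V = 4)
    (J : V →ₗ[ℝ] V) (hJ : J ∘ₗ J = -LinearMap.id)
    (ω : V →ₗ[ℝ] V →ₗ[ℝ] ℝ)
    (halt : ∀ v w : V, ω v w = -ω w v)
    (hanti : ∀ v w : V, ω (J v) (J w) = -ω v w) :
    ω = 0 ∨ (∀ v : V, (∀ w : V, ω v w = 0) → v = 0) := by
  rw [or_iff_not_imp_left]
  intro hω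
  by_contra! hdeg
  obtain ⟨v, hvK, hv0⟩ := hdeg
  replace hvK : v ∈ LinearMap.ker ω := LinearMap.mem_ker.mpr (LinearMap.ext hvK)
  have hJJ : ∀ x, J (J x) = -x := fun x => LinearMap.congr_fun hJ x
  obtain ⟨u, hu⟩ : ∃ u, u ∉ LinearMap.ker ω := by
    by_contra! h
    exact hω (LinearMap.ker_eq_top.mp (eq_top_iff.mpr fun x _ => h x))
  have hli := linearIndependent_J_pairs hJJ (fun x => J_mem_ker hJJ hanti) hvK hv0 hu
  have hcard : Fintype.card (Fin 4) = Module.finrank ℝ V := by simp [hdim]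
  let b := basisOfLinearIndependentOfCardEqFinrank hli hcard
  have hb : ⇑b = ![v, J v, u, J u] := coe_basisOfLinearIndependentOfCardEqFinrank hli hcard
  refine hω <| LinearMap.ext_basis b b fun i j => ?_
  have hJvK := J_mem_ker hJJ hanti hvK
  rw [LinearMap.mem_ker] at hvK hJvK
  fin_cases i <;> fin_cases j <;>
    simp [hb, hvK, hJvK, apply_eq_zero_of_mem_ker halt, self_eq_zero halt,
      self_J_eq_zero hJJ halt hanti, J_self_eq_zero hJJ halt hanti]

/-- Let `V` be a four-dimensional real vector space with a linear complex
structure `J` (an endomorphism with `J² = -id`), and let `ω` be an alternating bilinear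
form on `V` which is `J`-anti-invariant, i.e. `ω (J v) (J w) = -ω v w`.
Then either `ω = 0` or `ω` is nondegenerate. -/
theorem antiInvariant_form_zero_or_nondegenerate
    (V : Type*) [AddCommGroup V] [Module ℝ V] [FiniteDimensional ℝ V]
    (hdim : Module.finrank ℝ V = 4)
    (J : V →ₗ[ℝ] V) (hJ : J ∘ₗ J = -LinearMap.id)
    (ω : V →ₗ[ℝ] V →ₗ[ℝ] ℝ)
    (halt : ∀ v w : V, ω v w = -ω w v)
    (hanti : ∀ v w : V, ω (J v) (J w) = -ω v w) :
    ω = 0 ∨ (∀ v : V, (∀ w : V, ω v w = 0) → v = 0) :=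
  antiInvariant_form_zero_or_nondegenerate_general V hdim J hJ ω halt hanti
end

section
/- For the almost complex structure J_f on ℝ⁴, at every point one has N_{J_f}(∂/∂x₁, ∂/∂x₂) = -(∂f/∂y₂) ∂/∂x₂ + (∂f/∂x₂) ∂/∂y₂. -/
noncomputable section

/-- ℝ⁴ with coordinates (x₁, x₂, y₁, y₂) indexed by 0, 1, 2, 3. -/
abbrev E4 : Type := Fin 4 → ℝ

/-- Partial derivative of `g` in the `i`-th coordinate direction at `p`. -/
def pd (i : Fin 4) (g : E4 → ℝ) (p : E4) : ℝ := fderiv ℝ g p (Pi.single i 1)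

/-- Lie bracket of vector fields on ℝ⁴. -/
def lieBracket (X Y : E4 → E4) (p : E4) : E4 :=
  fderiv ℝ Y p (X p) - fderiv ℝ X p (Y p)

/-- Nijenhuis tensor `N_J(X,Y) = [JX,JY] - [X,Y] - J[JX,Y] - J[X,JY]`. -/
def nijenhuis (J : E4 → E4 → E4) (X Y : E4 → E4) (p : E4) : E4 :=
  lieBracket (fun x => J x (X x)) (fun x => J x (Y x)) p - lieBracket X Y p
    - J p (lieBracket (fun x => J x (X x)) Y p)
    - J p (lieBracket X (fun x => J x (Y x)) p)

/-- The almost complex structure `J_f` on ℝ⁴: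
`J_f ∂x₁ = f ∂x₂ + ∂y₁`, `J_f ∂x₂ = ∂y₂`, `J_f ∂y₁ = -∂x₁ - f ∂y₂`, `J_f ∂y₂ = -∂x₂`. -/
def Jf (f : E4 → ℝ) (p : E4) (v : E4) : E4 :=
  ![-(v 2), f p * v 0 - v 3, v 0, v 1 - f p * v 2]

/-- Exterior derivative of a 2-form on ℝ⁴ (given as a point-dependent bilinear form). -/
def extDeriv2 (ω : E4 → E4 → E4 → ℝ) (p u v w : E4) : ℝ :=
  fderiv ℝ (fun x => ω x v w) p u - fderiv ℝ (fun x => ω x u w) p v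
    + fderiv ℝ (fun x => ω x u v) p w

/-- A 2-form on ℝ⁴ is closed when its exterior derivative vanishes everywhere. -/
def IsClosed2 (ω : E4 → E4 → E4 → ℝ) : Prop := ∀ p u v w : E4, extDeriv2 ω p u v w = 0

/-- The 2-form `β = dx₁∧dx₂ - f dx₁∧dy₁ - dy₁∧dy₂`. -/
def betaF (f : E4 → ℝ) (p u v : E4) : ℝ :=
  (u 0 * v 1 - u 1 * v 0) - f p * (u 0 * v 2 - u 2 * v 0) - (u 2 * v 3 - u 3 * v 2)

/-- The 2-form `γ = dx₁∧dy₂ - dx₂∧dy₁`. -/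
def gammaF (p u v : E4) : ℝ :=
  (u 0 * v 3 - u 3 * v 0) - (u 1 * v 2 - u 2 * v 1)

/-- System (★) for the pair `(a, b)`:
`a_{y₁} - b_{x₁} + (fa)_{x₂} = 0`, `a_{x₁} + b_{y₁} + (fa)_{y₂} = 0`,
`a_{y₂} - b_{x₂} = 0`, `a_{x₂} + b_{y₂} = 0`. -/
def StarSystem (f a b : E4 → ℝ) : Prop :=
  (∀ p : E4, pd 2 a p - pd 0 b p + pd 1 (fun x => f x * a x) p = 0) ∧
  (∀ p : E4, pd 0 a p + pd 2 b p + pd 3 (fun x => f x * a x) p = 0) ∧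
  (∀ p : E4, pd 3 a p - pd 1 b p = 0) ∧
  (∀ p : E4, pd 1 a p + pd 3 b p = 0)

/-- For the almost complex structure `J_f` on ℝ⁴, at every point one has
`N_{J_f}(∂x₁, ∂x₂) = -(∂f/∂y₂) ∂x₂ + (∂f/∂x₂) ∂y₂`. -/
theorem nijenhuis_Jf_dx1_dx2 (f : E4 → ℝ) (hf : ContDiff ℝ (⊤ : ℕ∞) f) (p : E4) :
    nijenhuis (Jf f) (fun _ => Pi.single 0 1) (fun _ => Pi.single 1 1) p =
      -(pd 3 f p) • (Pi.single 1 1 : E4) + (pd 1 f p) • (Pi.single 3 1 : E4) := by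
  have hdf : DifferentiableAt ℝ f p := (hf.differentiable (by simp)).differentiableAt
  have hJX : (fun x => Jf f x (Pi.single 0 1)) = fun x : E4 => (![0, f x, 1, 0] : E4) := by
    funext x
    simp [Jf, Pi.single_apply]
  have hJY : (fun x => Jf f x (Pi.single 1 1)) = fun _ : E4 => (Pi.single 3 1 : E4) := by
    funext x i
    fin_cases i <;> simp [Jf, Pi.single_apply]
  have hL : HasFDerivAt (fun x : E4 => (![0, f x, 1, 0] : E4))
      (ContinuousLinearMap.pi ![0, fderiv ℝ f p, 0, 0]) p := by
    apply hasFDerivAt_pi''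
    intro i
    fin_cases i <;>
      simp [ContinuousLinearMap.ext_iff, Matrix.cons_val_zero, Matrix.cons_val_one] <;>
      first
        | exact hasFDerivAt_const _ _
        | exact hdf.hasFDerivAt
  have hfd : fderiv ℝ (fun x : E4 => (![0, f x, 1, 0] : E4)) p
      = ContinuousLinearMap.pi ![0, fderiv ℝ f p, 0, 0] := hL.fderiv
  have hv : (![(0:ℝ),0,0,1] : E4) = Pi.single 3 1 := by
    funext j; fin_cases j <;> simp [Pi.single_apply]
  simp only [nijenhuis, lieBracket, hJX, hJY, hfd]
  rw [fderiv_fun_const]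
  funext i
  fin_cases i <;>
    simp [Jf, pd, Pi.single_apply, ContinuousLinearMap.pi_apply, Matrix.vecHead, Matrix.vecTail, hv]
end
end

section
/- A J_f-anti-invariant 2-form α = aβ + bγ on ℝ⁴, with a,b : ℝ⁴ → ℝ smooth, is closed (dα = 0) if and only if (a,b) satisfies system (★). -/
noncomputable section

lemma fderiv_apply_basis (g : E4 → ℝ) (p u : E4) :
    fderiv ℝ g p u =
      u 0 * pd 0 g p + u 1 * pd 1 g p + u 2 * pd 2 g p + u 3 * pd 3 g p := by
  have hu : u = u 0 • (Pi.single 0 1 : E4) + u 1 • (Pi.single 1 1 : E4)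
      + u 2 • (Pi.single 2 1 : E4) + u 3 • (Pi.single 3 1 : E4) := by
    funext j; fin_cases j <;> simp [Pi.single_apply]
  conv_lhs => rw [hu]
  simp only [pd, map_add, map_smul, smul_eq_mul]

lemma fderiv_omega (f a b : E4 → ℝ) (hf : ContDiff ℝ (⊤ : ℕ∞) f) (ha : ContDiff ℝ (⊤ : ℕ∞) a)
    (hb : ContDiff ℝ (⊤ : ℕ∞) b) (p v w : E4) :
    fderiv ℝ (fun x => a x * betaF f x v w + b x * gammaF x v w) p =
      ((v 0 * w 1 - v 1 * w 0) - (v 2 * w 3 - v 3 * w 2)) • fderiv ℝ a p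
      - (v 0 * w 2 - v 2 * w 0) • fderiv ℝ (fun x => f x * a x) p
      + ((v 0 * w 3 - v 3 * w 0) - (v 1 * w 2 - v 2 * w 1)) • fderiv ℝ b p := by
  have HA : HasFDerivAt a (fderiv ℝ a p) p :=
    (ha.differentiable (by simp) p).hasFDerivAt
  have HC : HasFDerivAt (fun x => f x * a x) (fderiv ℝ (fun x => f x * a x) p) p :=
    (((hf.mul ha).differentiable (by simp)) p).hasFDerivAt
  have HB : HasFDerivAt b (fderiv ℝ b p) p :=
    (hb.differentiable (by simp) p).hasFDerivAt
  have H := ((HA.mul_const ((v 0 * w 1 - v 1 * w 0) - (v 2 * w 3 - v 3 * w 2))).sub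
      (HC.mul_const (v 0 * w 2 - v 2 * w 0))).add
      (HB.mul_const ((v 0 * w 3 - v 3 * w 0) - (v 1 * w 2 - v 2 * w 1)))
  have heq : (fun x => a x * betaF f x v w + b x * gammaF x v w) =
      (fun x => (a x * ((v 0 * w 1 - v 1 * w 0) - (v 2 * w 3 - v 3 * w 2))
        - (f x * a x) * (v 0 * w 2 - v 2 * w 0))
        + b x * ((v 0 * w 3 - v 3 * w 0) - (v 1 * w 2 - v 2 * w 1))) := by
    funext x; simp only [betaF, gammaF]; ring
  rw [heq]
  exact H.fderiv

/-- A `J_f`-anti-invariant 2-form `α = aβ + bγ` on ℝ⁴, with `a, b` smooth,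
is closed (`dα = 0`) if and only if `(a, b)` satisfies system (★). -/
theorem alpha_closed_iff_starSystem (f a b : E4 → ℝ)
    (hf : ContDiff ℝ (⊤ : ℕ∞) f) (ha : ContDiff ℝ (⊤ : ℕ∞) a) (hb : ContDiff ℝ (⊤ : ℕ∞) b) :
    IsClosed2 (fun p u v => a p * betaF f p u v + b p * gammaF p u v) ↔
      StarSystem f a b := by
  have key : ∀ p u v w : E4,
      extDeriv2 (fun p u v => a p * betaF f p u v + b p * gammaF p u v) p u v w =
      ((u 0 * pd 0 a p + u 1 * pd 1 a p + u 2 * pd 2 a p + u 3 * pd 3 a p)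
          * ((v 0 * w 1 - v 1 * w 0) - (v 2 * w 3 - v 3 * w 2))
        - (u 0 * pd 0 (fun x => f x * a x) p + u 1 * pd 1 (fun x => f x * a x) p
          + u 2 * pd 2 (fun x => f x * a x) p + u 3 * pd 3 (fun x => f x * a x) p)
          * (v 0 * w 2 - v 2 * w 0)
        + (u 0 * pd 0 b p + u 1 * pd 1 b p + u 2 * pd 2 b p + u 3 * pd 3 b p)
          * ((v 0 * w 3 - v 3 * w 0) - (v 1 * w 2 - v 2 * w 1)))
      - ((v 0 * pd 0 a p + v 1 * pd 1 a p + v 2 * pd 2 a p + v 3 * pd 3 a p)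
          * ((u 0 * w 1 - u 1 * w 0) - (u 2 * w 3 - u 3 * w 2))
        - (v 0 * pd 0 (fun x => f x * a x) p + v 1 * pd 1 (fun x => f x * a x) p
          + v 2 * pd 2 (fun x => f x * a x) p + v 3 * pd 3 (fun x => f x * a x) p)
          * (u 0 * w 2 - u 2 * w 0)
        + (v 0 * pd 0 b p + v 1 * pd 1 b p + v 2 * pd 2 b p + v 3 * pd 3 b p)
          * ((u 0 * w 3 - u 3 * w 0) - (u 1 * w 2 - u 2 * w 1)))
      + ((w 0 * pd 0 a p + w 1 * pd 1 a p + w 2 * pd 2 a p + w 3 * pd 3 a p)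
          * ((u 0 * v 1 - u 1 * v 0) - (u 2 * v 3 - u 3 * v 2))
        - (w 0 * pd 0 (fun x => f x * a x) p + w 1 * pd 1 (fun x => f x * a x) p
          + w 2 * pd 2 (fun x => f x * a x) p + w 3 * pd 3 (fun x => f x * a x) p)
          * (u 0 * v 2 - u 2 * v 0)
        + (w 0 * pd 0 b p + w 1 * pd 1 b p + w 2 * pd 2 b p + w 3 * pd 3 b p)
          * ((u 0 * v 3 - u 3 * v 0) - (u 1 * v 2 - u 2 * v 1))) := by
    intro p u v w
    simp only [extDeriv2, fderiv_omega f a b hf ha hb,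
      ContinuousLinearMap.add_apply, ContinuousLinearMap.sub_apply,
      ContinuousLinearMap.smul_apply, smul_eq_mul, fderiv_apply_basis]
    ring
  constructor
  · intro h
    refine ⟨fun p => ?_, fun p => ?_, fun p => ?_, fun p => ?_⟩
    · have H := h p ![1,0,0,0] ![0,1,0,0] ![0,0,1,0]
      rw [key] at H
      norm_num [Matrix.cons_val_zero, Matrix.cons_val_one, Matrix.head_cons,
        Matrix.cons_val_two, Matrix.cons_val_three, Matrix.tail_cons] at H
      linarith
    · have H := h p ![1,0,0,0] ![0,0,1,0] ![0,0,0,1]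
      rw [key] at H
      norm_num [Matrix.cons_val_zero, Matrix.cons_val_one, Matrix.head_cons,
        Matrix.cons_val_two, Matrix.cons_val_three, Matrix.tail_cons] at H
      linarith
    · have H := h p ![1,0,0,0] ![0,1,0,0] ![0,0,0,1]
      rw [key] at H
      norm_num [Matrix.cons_val_zero, Matrix.cons_val_one, Matrix.head_cons,
        Matrix.cons_val_two, Matrix.cons_val_three, Matrix.tail_cons] at H
      linarith
    · have H := h p ![0,1,0,0] ![0,0,1,0] ![0,0,0,1]
      rw [key] at H
      norm_num [Matrix.cons_val_zero, Matrix.cons_val_one, Matrix.head_cons,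
        Matrix.cons_val_two, Matrix.cons_val_three, Matrix.tail_cons] at H
      linarith
  · rintro ⟨h1, h2, h3, h4⟩ p u v w
    rw [key]
    linear_combination
      (u 0 * (v 1 * w 2 - v 2 * w 1) - u 1 * (v 0 * w 2 - v 2 * w 0)
        + u 2 * (v 0 * w 1 - v 1 * w 0)) * h1 p
      - (u 0 * (v 2 * w 3 - v 3 * w 2) - u 2 * (v 0 * w 3 - v 3 * w 0)
        + u 3 * (v 0 * w 2 - v 2 * w 0)) * h2 p
      + (u 0 * (v 1 * w 3 - v 3 * w 1) - u 1 * (v 0 * w 3 - v 3 * w 0)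
        + u 3 * (v 0 * w 1 - v 1 * w 0)) * h3 p
      - (u 1 * (v 2 * w 3 - v 3 * w 2) - u 2 * (v 1 * w 3 - v 3 * w 1)
        + u 3 * (v 1 * w 2 - v 2 * w 1)) * h4 p
end
end

section
/- Let f(x₁,x₂,y₁,y₂) = x₂ and J = J_{x₂}. Then: (I) J is a non-integrable almost complex structure on ℝ⁴, i.e. its Nijenhuis tensor does not vanish identically; (II) for every pair (s,t) ∈ ℝ² with s² + t² + t = 0, the 2-form α_{s,t} = t e^{s x₁ + t y₁} β - s e^{s x₁ + t y₁} γ is J-anti-invariant and closed. -/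
noncomputable section

-- auxiliary: derivative of an affine-in-`x 1` vector field.
lemma fderiv_smul_add_aux (c d : E4) (p u : E4) :
    fderiv ℝ (fun x : E4 => (x 1) • c + d) p u = (u 1) • c := by
  have h : HasFDerivAt (fun x : E4 => (x 1) • c + d)
      ((ContinuousLinearMap.proj 1 : E4 →L[ℝ] ℝ).smulRight c) p :=
    (((ContinuousLinearMap.proj 1 : E4 →L[ℝ] ℝ).hasFDerivAt (x := p)).smul_const c).add_const d
  rw [h.fderiv]
  simp

-- auxiliary: derivative of `(c1 + c2 x₂) e^{s x₁ + t y₁}`.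
lemma fderiv_aff_exp_aux (c1 c2 s t : ℝ) (p u : E4) :
    fderiv ℝ (fun x : E4 => (c1 + c2 * x 1) * Real.exp (s * x 0 + t * x 2)) p u =
      c2 * u 1 * Real.exp (s * p 0 + t * p 2)
        + (c1 + c2 * p 1) * Real.exp (s * p 0 + t * p 2) * (s * u 0 + t * u 2) := by
  have h0 : HasFDerivAt (fun x : E4 => x 0) (ContinuousLinearMap.proj 0 : E4 →L[ℝ] ℝ) p :=
    (ContinuousLinearMap.proj 0 : E4 →L[ℝ] ℝ).hasFDerivAt
  have h1 : HasFDerivAt (fun x : E4 => x 1) (ContinuousLinearMap.proj 1 : E4 →L[ℝ] ℝ) p :=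
    (ContinuousLinearMap.proj 1 : E4 →L[ℝ] ℝ).hasFDerivAt
  have h2' : HasFDerivAt (fun x : E4 => x 2) (ContinuousLinearMap.proj 2 : E4 →L[ℝ] ℝ) p :=
    (ContinuousLinearMap.proj 2 : E4 →L[ℝ] ℝ).hasFDerivAt
  have ha : HasFDerivAt (fun x : E4 => c1 + c2 * x 1)
      (c2 • (ContinuousLinearMap.proj 1 : E4 →L[ℝ] ℝ)) p := (h1.const_mul c2).const_add c1
  have hb : HasFDerivAt (fun x : E4 => s * x 0 + t * x 2)
      (s • (ContinuousLinearMap.proj 0 : E4 →L[ℝ] ℝ)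
        + t • (ContinuousLinearMap.proj 2 : E4 →L[ℝ] ℝ)) p :=
    (h0.const_mul s).add (h2'.const_mul t)
  have hd := ha.mul hb.exp
  rw [show (fun x : E4 => (c1 + c2 * x 1) * Real.exp (s * x 0 + t * x 2)) =
      ((fun x : E4 => c1 + c2 * x 1) * fun x : E4 => Real.exp (s * x 0 + t * x 2)) from rfl,
    hd.fderiv]
  simp [ContinuousLinearMap.smul_apply, ContinuousLinearMap.add_apply]
  ring

/-- Let `f = x₂` and `J = J_{x₂}`.  Then
(I) `J` is a non-integrable almost complex structure on ℝ⁴ (its Nijenhuis tensor does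
not vanish identically), and
(II) for every pair `(s, t) ∈ ℝ²` with `s² + t² + t = 0`, the 2-form
`α_{s,t} = t e^{s x₁ + t y₁} β - s e^{s x₁ + t y₁} γ` is `J`-anti-invariant and closed. -/

theorem Jx2_nonintegrable_and_alpha_st_closed :
    -- J_{x₂} is an almost complex structure …
    (∀ p v : E4, Jf (fun x => x 1) p (Jf (fun x => x 1) p v) = -v) ∧
    -- (I) … which is non-integrable
    (¬ ∀ X Y : E4 → E4, ContDiff ℝ (⊤ : ℕ∞) X → ContDiff ℝ (⊤ : ℕ∞) Y →
        ∀ p : E4, nijenhuis (Jf (fun x => x 1)) X Y p = 0) ∧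
    -- (II) the forms α_{s,t} are J-anti-invariant and closed
    (∀ s t : ℝ, s ^ 2 + t ^ 2 + t = 0 →
      (∀ p u v : E4,
        (fun p u v => t * Real.exp (s * p 0 + t * p 2) * betaF (fun x => x 1) p u v
            - s * Real.exp (s * p 0 + t * p 2) * gammaF p u v) p
          (Jf (fun x => x 1) p u) (Jf (fun x => x 1) p v) =
        -(fun p u v => t * Real.exp (s * p 0 + t * p 2) * betaF (fun x => x 1) p u v
            - s * Real.exp (s * p 0 + t * p 2) * gammaF p u v) p u v) ∧
      IsClosed2 (fun p u v => t * Real.exp (s * p 0 + t * p 2) * betaF (fun x => x 1) p u v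
          - s * Real.exp (s * p 0 + t * p 2) * gammaF p u v)) := by
  refine ⟨?_, ?_, ?_⟩
  · -- J² = -1
    intro p v
    funext i
    fin_cases i <;> simp [Jf] <;> ring
  · -- non-integrability
    intro hint
    have h := hint (fun _ => ![1,0,0,0]) (fun _ => ![0,0,1,0]) contDiff_const contDiff_const
      (fun _ => 1)
    have eX : (fun x : E4 => Jf (fun y => y 1) x ((fun _ : E4 => (![1,0,0,0] : E4)) x))
        = fun x : E4 => (x 1) • (![0,1,0,0] : E4) + ![0,0,1,0] := by
      funext x i
      fin_cases i <;> simp [Jf]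
    have eY : (fun x : E4 => Jf (fun y => y 1) x ((fun _ : E4 => (![0,0,1,0] : E4)) x))
        = fun x : E4 => (x 1) • (![0,0,0,-1] : E4) + ![-1,0,0,0] := by
      funext x i
      fin_cases i <;> simp [Jf]
    have h3 := congrFun h 3
    rw [nijenhuis, eX, eY] at h3
    simp only [lieBracket, fderiv_smul_add_aux, fderiv_const, Pi.zero_apply,
      ContinuousLinearMap.zero_apply] at h3
    norm_num [Jf] at h3
    change (-1 : ℝ) - 0 = 0 at h3
    norm_num at h3
  · -- anti-invariance and closedness
    intro s t h
    constructor
    · intro p u v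
      simp only [Jf, betaF, gammaF]
      norm_num [Matrix.cons_val_two, Matrix.cons_val_three]
      ring
    · intro p u v w
      have key : ∀ a b : E4,
          (fun x : E4 => t * Real.exp (s * x 0 + t * x 2) * betaF (fun y => y 1) x a b
              - s * Real.exp (s * x 0 + t * x 2) * gammaF x a b)
          = fun x : E4 =>
              ((t * ((a 0 * b 1 - a 1 * b 0) - (a 2 * b 3 - a 3 * b 2))
                - s * ((a 0 * b 3 - a 3 * b 0) - (a 1 * b 2 - a 2 * b 1)))
               + (-(t * (a 0 * b 2 - a 2 * b 0))) * x 1) * Real.exp (s * x 0 + t * x 2) := by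
        intro a b
        funext x
        simp only [betaF, gammaF]
        ring
      simp only [extDeriv2, key, fderiv_aff_exp_aux]
      linear_combination (Real.exp (s * p 0 + t * p 2) *
        (u 0 * (v 1 * w 2 - v 2 * w 1) - v 0 * (u 1 * w 2 - u 2 * w 1)
          + w 0 * (u 1 * v 2 - u 2 * v 1))) * h
end
end

section
/- Let f = x₂ and J = J_{x₂} on ℝ⁴. For each integer n ≥ 1 set s_n = √(n-1)/n, t_n = -1/n and α_n = t_n e^{s_n x₁ + t_n y₁} β - s_n e^{s_n x₁ + t_n y₁} γ. Then each α_n is a closed J-anti-invariant 2-form on ℝ⁴, for every m ≥ 1 the forms α₁, …, α_m are linearly independent over ℝ, and consequently the real vector space of closed J-anti-invariant 2-forms on ℝ⁴ is infinite-dimensional. -/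
/-!
Both `β` and `γ` are pointwise `J_f`-anti-invariant, hence so is every `a β + b γ`.
For `f = x₂` the form `e^{s x₁ + t y₁} (t β - s γ)` has exterior derivative
`(s² + t² + t) e^{s x₁ + t y₁} dx₁ ∧ dx₂ ∧ dy₁`, and `(s_n, t_n)` lies on the circle
`s² + t² + t = 0`. Reading off the `dx₁ ∧ dx₂`-component along the `y₁`-axis sends `α_n`
to `y ↦ t_n e^{t_n y}`; exponentials with distinct rates are linearly independent by
Dedekind's independence of characters, applied to the additive group of `ℝ`.
-/

noncomputable section

/-- The closed anti-invariant forms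
`α_n = t_n e^{s_n x₁ + t_n y₁} β - s_n e^{s_n x₁ + t_n y₁} γ`
for `J = J_{x₂}`, where `s_n = √(n-1)/n` and `t_n = -1/n`. -/
def alphaN (n : ℕ) (p u v : E4) : ℝ :=
  (-1 / n) * Real.exp (Real.sqrt ((n : ℝ) - 1) / n * p 0 + (-1 / n) * p 2)
      * betaF (fun x => x 1) p u v
    - Real.sqrt ((n : ℝ) - 1) / n
        * Real.exp (Real.sqrt ((n : ℝ) - 1) / n * p 0 + (-1 / n) * p 2) * gammaF p u v

/-- A 2-form is `J_{x₂}`-anti-invariant. -/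
def IsAntiInvariantJx2 (α : E4 → E4 → E4 → ℝ) : Prop :=
  ∀ p u v : E4, α p (Jf (fun x => x 1) p u) (Jf (fun x => x 1) p v) = -α p u v

lemma betaF_Jf (f : E4 → ℝ) (p u v : E4) :
    betaF f p (Jf f p u) (Jf f p v) = -betaF f p u v := by
  simp only [betaF, Jf, Matrix.cons_val_zero, Matrix.cons_val_one, Matrix.cons_val_two,
    Matrix.cons_val_three, Matrix.head_cons, Matrix.tail_cons]
  ring

lemma gammaF_Jf (f : E4 → ℝ) (p u v : E4) :
    gammaF p (Jf f p u) (Jf f p v) = -gammaF p u v := by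
  simp only [gammaF, Jf, Matrix.cons_val_zero, Matrix.cons_val_one, Matrix.cons_val_two,
    Matrix.cons_val_three, Matrix.head_cons, Matrix.tail_cons]
  ring

lemma fderiv_exp_mul_affine {E : Type*} [NormedAddCommGroup E] [NormedSpace ℝ E]
    (ℓ m : E →L[ℝ] ℝ) (c : ℝ) (p w : E) :
    fderiv ℝ (fun x => Real.exp (ℓ x) * (c + m x)) p w
      = Real.exp (ℓ p) * ((c + m p) * ℓ w + m w) := by
  have h : HasFDerivAt (fun x => Real.exp (ℓ x) * (c + m x)) _ p :=
    ℓ.hasFDerivAt.exp.mul ((hasFDerivAt_const c p).add m.hasFDerivAt)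
  rw [h.fderiv]
  simp only [add_apply, smul_apply, smul_eq_mul, zero_add]
  ring

namespace Real

def expChar (c : ℝ) : Multiplicative ℝ →* ℝ where
  toFun y := exp (c * y.toAdd)
  map_one' := by simp
  map_mul' x y := by simp [mul_add, exp_add]

lemma expChar_injective : Function.Injective expChar := fun c c' h => by
  simpa [expChar] using congr(Real.log ($h (Multiplicative.ofAdd 1)))

lemma linearIndependent_exp_mul {ι : Type*} {c : ι → ℝ} (hc : Function.Injective c) :
    LinearIndependent ℝ (fun i (y : ℝ) => exp (c i * y)) :=
  ((linearIndependent_monoidHom _ ℝ).comp _ (expChar_injective.comp hc)).map'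
    (LinearEquiv.funCongrLeft ℝ ℝ Multiplicative.ofAdd).toLinearMap (LinearEquiv.ker _)

end Real

def expForm (s t : ℝ) (p u v : E4) : ℝ :=
  Real.exp (s * p 0 + t * p 2) * (t * betaF (fun x => x 1) p u v - s * gammaF p u v)

lemma alphaN_eq_expForm (n : ℕ) :
    alphaN n = expForm (Real.sqrt ((n : ℝ) - 1) / n) (-1 / n) := by
  ext p u v
  simp only [alphaN, expForm]
  ring

lemma expForm_isAntiInvariant (s t : ℝ) : IsAntiInvariantJx2 (expForm s t) := by
  intro p u v
  simp only [expForm, betaF_Jf, gammaF_Jf]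
  ring

open ContinuousLinearMap in
lemma expForm_isClosed2 {s t : ℝ} (h : s ^ 2 + t ^ 2 + t = 0) : IsClosed2 (expForm s t) := by
  intro p u v w
  set ℓ : E4 →L[ℝ] ℝ := s • proj 0 + t • proj 2
  have affine : ∀ a b : E4, (fun x => expForm s t x a b) = fun x => Real.exp (ℓ x) *
      ((t * ((a 0 * b 1 - a 1 * b 0) - (a 2 * b 3 - a 3 * b 2))
          - s * ((a 0 * b 3 - a 3 * b 0) - (a 1 * b 2 - a 2 * b 1)))
        + ((-t * (a 0 * b 2 - a 2 * b 0)) • proj 1 : E4 →L[ℝ] ℝ) x) := by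
    intro a b
    ext x
    simp only [expForm, betaF, gammaF, ℓ, add_apply, smul_apply, proj_apply, smul_eq_mul]
    ring
  rw [extDeriv2, affine v w, affine u w, affine u v, fderiv_exp_mul_affine,
    fderiv_exp_mul_affine, fderiv_exp_mul_affine]
  simp only [ℓ, add_apply, smul_apply, proj_apply, smul_eq_mul]
  linear_combination (Real.exp (s * p 0 + t * p 2) *
    (u 0 * (v 1 * w 2 - v 2 * w 1) - v 0 * (u 1 * w 2 - u 2 * w 1)
      + w 0 * (u 1 * v 2 - u 2 * v 1))) * h

lemma sqrt_sub_one_div_sq_add_eq_zero (n : ℕ) (hn : 1 ≤ n) :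
    (Real.sqrt ((n : ℝ) - 1) / n) ^ 2 + (-1 / n) ^ 2 + -1 / n = 0 := by
  have hn' : (1 : ℝ) ≤ n := by exact_mod_cast hn
  rw [div_pow, Real.sq_sqrt (by linarith)]
  field_simp
  ring

def evalAlongY₁ : (E4 → E4 → E4 → ℝ) →ₗ[ℝ] ℝ → ℝ where
  toFun ω y := ω (Pi.single 2 y) (Pi.single 0 1) (Pi.single 1 1)
  map_add' _ _ := rfl
  map_smul' _ _ := rfl

lemma evalAlongY₁_expForm (s t : ℝ) :
    evalAlongY₁ (expForm s t) = fun y => t * Real.exp (t * y) := by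
  ext y
  simp [evalAlongY₁, expForm, betaF, gammaF, mul_comm]

lemma linearIndependent_expForm {ι : Type*} {s t : ι → ℝ} (ht : Function.Injective t)
    (ht₀ : ∀ i, t i ≠ 0) : LinearIndependent ℝ (fun i => expForm (s i) (t i)) := by
  refine .of_comp evalAlongY₁ ?_
  convert (Real.linearIndependent_exp_mul ht).units_smul (fun i => Units.mk0 (t i) (ht₀ i)) with i
  ext y
  simp [evalAlongY₁_expForm]

lemma alphaN_succ_linearIndependent (m : ℕ) :
    LinearIndependent ℝ (fun i : Fin m => alphaN (i.1 + 1)) := by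
  simp_rw [alphaN_eq_expForm]
  refine linearIndependent_expForm (fun i j hij => ?_) (fun i => by positivity)
  rw [div_eq_div_iff (by positivity) (by positivity), mul_right_inj' (by norm_num),
    Nat.cast_inj, add_left_inj] at hij
  exact Fin.ext hij.symm

/-- Let `f = x₂` and `J = J_{x₂}` on ℝ⁴.  For `n ≥ 1` set `s_n = √(n-1)/n`,
`t_n = -1/n` and `α_n = t_n e^{s_n x₁ + t_n y₁} β - s_n e^{s_n x₁ + t_n y₁} γ`.  Then each
`α_n` is a closed `J`-anti-invariant 2-form on ℝ⁴, for every `m ≥ 1` the forms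
`α₁, …, α_m` are linearly independent over ℝ, and consequently the real vector space of
closed `J`-anti-invariant 2-forms on ℝ⁴ is infinite-dimensional (it contains families of
linearly independent vectors of arbitrary finite cardinality). -/
theorem alphaN_closed_antiInvariant_linearIndependent :
    (∀ n : ℕ, 1 ≤ n → IsClosed2 (alphaN n) ∧ IsAntiInvariantJx2 (alphaN n)) ∧
    (∀ m : ℕ, 1 ≤ m →
      LinearIndependent ℝ (fun i : Fin m => alphaN (i.1 + 1))) ∧
    (∀ m : ℕ, ∃ A : Fin m → (E4 → E4 → E4 → ℝ),
      (∀ i, IsClosed2 (A i) ∧ IsAntiInvariantJx2 (A i)) ∧ LinearIndependent ℝ A) := by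
  have closed_anti (n : ℕ) (hn : 1 ≤ n) :
      IsClosed2 (alphaN n) ∧ IsAntiInvariantJx2 (alphaN n) := by
    rw [alphaN_eq_expForm]
    exact ⟨expForm_isClosed2 (sqrt_sub_one_div_sq_add_eq_zero n hn),
      expForm_isAntiInvariant _ _⟩
  exact ⟨closed_anti, fun m _ => alphaN_succ_linearIndependent m, fun m =>
    ⟨_, fun i => closed_anti _ (Nat.le_add_left 1 i.1), alphaN_succ_linearIndependent m⟩⟩
end
end

section
/- Suppose f : ℝ⁴ → ℝ is smooth with compact support, and for K ∈ ℝ let ω_K = K dx₁∧dy₁ + dx₂∧dy₂. Then there exists K₀ > 0 such that for every K ≥ K₀ the symplectic form ω_K tames J_f, i.e. ω_K(v, J_f v) > 0 for every nonzero tangent vector v at every point of ℝ⁴. -/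
noncomputable section

/-- The symplectic form `ω_K = K dx₁∧dy₁ + dx₂∧dy₂`. -/
def omegaK (K : ℝ) (u v : E4) : ℝ :=
  K * (u 0 * v 2 - u 2 * v 0) + (u 1 * v 3 - u 3 * v 1)

/-- Suppose `f : ℝ⁴ → ℝ` is smooth with compact support, and for `K ∈ ℝ`
let `ω_K = K dx₁∧dy₁ + dx₂∧dy₂`.  Then there is `K₀ > 0` such that for every `K ≥ K₀`
the symplectic form `ω_K` tames `J_f`, i.e. `ω_K(v, J_f v) > 0` for every nonzero tangent
vector `v` at every point of ℝ⁴. -/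
theorem omegaK_tames_Jf (f : E4 → ℝ)
    (hf : ContDiff ℝ (⊤ : ℕ∞) f) (hsupp : HasCompactSupport f) :
    ∃ K₀ : ℝ, 0 < K₀ ∧ ∀ K : ℝ, K₀ ≤ K →
      ∀ (p v : E4), v ≠ 0 → 0 < omegaK K v (Jf f p v) := by
  obtain ⟨C, hC⟩ := hsupp.exists_bound_of_continuous hf.continuous
  have hC0 : 0 ≤ C := le_trans (norm_nonneg _) (hC 0)
  refine ⟨C ^ 2 + 1, by positivity, ?_⟩
  intro K hK p v hv
  obtain ⟨i, hi⟩ := Function.ne_iff.mp hv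
  have hfp : |f p| ≤ C := by simpa [Real.norm_eq_abs] using hC p
  have h1 : - C ≤ f p := (abs_le.mp hfp).1
  have h2 : f p ≤ C := (abs_le.mp hfp).2
  simp only [omegaK, Jf, Pi.zero_apply] at *
  simp only [Matrix.cons_val_zero, Matrix.cons_val_one, Matrix.head_cons,
    Matrix.cons_val_two, Matrix.tail_cons, Matrix.cons_val_three]
  fin_cases i <;>
  · first
    | (have hpos : 0 < v 0 ^ 2 := by positivity)
    | (have hpos : 0 < v 1 ^ 2 := by positivity)
    | (have hpos : 0 < v 2 ^ 2 := by positivity)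
    | (have hpos : 0 < v 3 ^ 2 := by positivity)
    have hf2 : f p ^ 2 ≤ C ^ 2 := sq_le_sq' h1 h2
    have hA : 0 ≤ (C ^ 2 - f p ^ 2) * (v 0 ^ 2 + v 2 ^ 2) :=
      mul_nonneg (by linarith) (by positivity)
    have hB : 0 ≤ (K - (C ^ 2 + 1)) * (v 0 ^ 2 + v 2 ^ 2) :=
      mul_nonneg (by linarith) (by positivity)
    nlinarith [hA, hB, sq_nonneg (v 1 - f p * v 2), sq_nonneg (v 3 - f p * v 0),
      hpos, sq_nonneg (v 0), sq_nonneg (v 1), sq_nonneg (v 2), sq_nonneg (v 3)]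
end
end
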